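/- If a rational function R(z) = N(z)/D(z) with real coefficients satisfies: D has no zeros in the closed left half-plane, deg N < deg D, and |D(iy)|² − |N(iy)|² ≥ 0 for all real y, then R is L-acceptable, i.e. |R(z)| ≤ 1 for all z with Re(z) ≤ 0 and R(z) → 0 as Re(z) → −∞. -/

import Mathlib

open Polynomial Filter

open Bornology Complex Topology

/-!
On the imaginary axis, `|R(iy)| ≤ 1` is just `|D(iy)|² - |N(iy)|² ≥ 0`. Since `D` has no
zeros in `Re z ≤ 0`, `R` is holomorphic there, and `deg N < deg D` makes `R → 0` at infinity,
so `R` is bounded. The Phragmén–Lindelöf principle on the left half-plane then carries the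
bound `1` from the imaginary axis to the whole closed half-plane; and `Re z → -∞` forces
`|z| → ∞`, hence `R(z) → 0`.
-/

theorem Polynomial.tendsto_aeval_div_aeval_cobounded {K A : Type*} [Field K] [NormedField A]
    [Algebra K A] {P Q : K[X]} (h : P.degree < Q.degree) :
    Tendsto (fun z : A => aeval z P / aeval z Q) (cobounded A) (𝓝 0) := by
  have hinj := (algebraMap K A).injective
  have hdeg : (P.map (algebraMap K A)).degree < (Q.map (algebraMap K A)).degree := by
    rwa [degree_map_eq_of_injective hinj, degree_map_eq_of_injective hinj]
  simpa only [eval_map_algebraMap] using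
    (isLittleO_cobounded_of_degree_lt hdeg).tendsto_div_nhds_zero

theorem Complex.comap_re_atBot_le_cobounded : comap re atBot ≤ cobounded ℂ := by
  rw [← tendsto_id', ← tendsto_norm_atTop_iff_cobounded]
  exact tendsto_atTop_mono (fun z => (neg_le_abs z.re).trans (abs_re_le_norm z))
    (tendsto_neg_atBot_atTop.comp tendsto_comap)

theorem PhragmenLindelof.left_half_plane_of_bounded {E : Type*} [NormedAddCommGroup E]
    [NormedSpace ℂ E] {f : ℂ → E} {C : ℝ} (hd : DiffContOnCl ℂ f {z | z.re < 0})
    (hb : f =O[cobounded ℂ] fun _ => (1 : ℝ))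
    (him : ∀ y : ℝ, ‖f (y * I)‖ ≤ C) {z : ℂ} (hz : z.re ≤ 0) : ‖f z‖ ≤ C := by
  have hb' : (fun z => f (-z)) =O[cobounded ℂ] fun _ => (1 : ℝ) :=
    hb.comp_tendsto tendsto_neg_cobounded
  have hd' : DiffContOnCl ℂ (fun z => f (-z)) {z | 0 < z.re} :=
    hd.comp differentiable_neg.diffContOnCl fun w hw => by simpa using hw
  have hexp : ∃ c < (2 : ℝ), ∃ B, (fun z => f (-z)) =O[cobounded ℂ ⊓ 𝓟 {z | 0 < z.re}]
      fun z => Real.exp (B * ‖z‖ ^ c) :=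
    ⟨1, one_lt_two, 0, by simpa using hb'.mono inf_le_left⟩
  have hre : IsBoundedUnder (· ≤ ·) atTop fun x : ℝ => ‖f (-x)‖ :=
    (Asymptotics.isBigO_one_iff ℝ).mp <|
      hb'.comp_tendsto (RCLike.tendsto_ofReal_atTop_cobounded ℂ)
  have him' (y : ℝ) : ‖f (-(y * I))‖ ≤ C := by simpa using him (-y)
  simpa using PhragmenLindelof.right_half_plane_of_bounded_on_real hd' hexp hre him'
    (z := -z) (by simpa using hz)

/-- If `R = N/D` with real coefficients, `D` has no zeros in the closed left
half-plane, `deg N < deg D`, and `|D(iy)|² - |N(iy)|² ≥ 0` for all real `y`,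
then `R` is L-acceptable: `|R(z)| ≤ 1` on the closed left half-plane and
`R(z) → 0` as `Re z → -∞`. -/
theorem stmt_1 (N D : Polynomial ℝ)
    (hD : ∀ z : ℂ, z.re ≤ 0 → Polynomial.aeval z D ≠ 0)
    (hdeg : N.degree < D.degree)
    (hE : ∀ y : ℝ,
      0 ≤ ‖Polynomial.aeval (Complex.I * y) D‖ ^ 2
          - ‖Polynomial.aeval (Complex.I * y) N‖ ^ 2) :
    (∀ z : ℂ, z.re ≤ 0 →
        ‖Polynomial.aeval z N / Polynomial.aeval z D‖ ≤ 1) ∧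
      Tendsto (fun z : ℂ => Polynomial.aeval z N / Polynomial.aeval z D)
        (Filter.comap Complex.re Filter.atBot) (nhds 0) := by
  have hlim := tendsto_aeval_div_aeval_cobounded (A := ℂ) hdeg
  have hd : DiffContOnCl ℂ (fun z : ℂ => aeval z N / aeval z D) {z | z.re < 0} := by
    refine DifferentiableOn.diffContOnCl ?_
    rw [closure_setOfPred_re_lt]
    exact N.differentiable_aeval.differentiableOn.div D.differentiable_aeval.differentiableOn hD
  have him (y : ℝ) : ‖aeval (y * I) N / aeval (y * I) D‖ ≤ 1 := by
    rw [norm_div, mul_comm]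
    refine div_le_one_of_le₀ ?_ (norm_nonneg _)
    exact (pow_le_pow_iff_left₀ (norm_nonneg _) (norm_nonneg _) two_ne_zero).mp
      (sub_nonneg.mp (hE y))
  exact ⟨fun z hz => PhragmenLindelof.left_half_plane_of_bounded hd (hlim.isBigO_one ℝ) him hz,
    hlim.mono_left comap_re_atBot_le_cobounded⟩
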